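/- arXiv:2402.13198 — 4 statements merged into one kernel-verified Lean document; each statement's English description precedes it below -/
import Mathlib

section
/- For every ε > 0 there exists x₀ such that for all real x ≥ x₀ and all real y with x < y ≤ x², setting u := log x / log y (so u ∈ [1/2, 1)), one has #{n ∈ ℕ : 1 ≤ n ≤ x, P⁺(n²+1) ≤ y} ≥ (1 − u − ε)·x. -/
/-!
Let `N = ⌊x⌋`. For each `n ≤ N`, the primes `p ≤ N` with `p ≡ 1 (mod 4)` dividing `n² + 1`,
together with one prime `> y > N` when `P⁺(n² + 1) > y`, are distinct prime factors of
`n² + 1`, so their logarithms add up to at most `log (n² + 1)`. Summing over `n`, each such `p`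
is counted for at least `2N/p - 2` values of `n` (the two square roots of `-1` mod `p`), and
`∑_{p ≤ N, p ≡ 1 (4)} log p / p ≥ ½ log N - O(1)`; against `∑ log (n² + 1) ≤ 2N log N + O(N)`
this leaves at most `(N log N + O(N)) / log y = u x + O(x / log x)` values of `n` with
`P⁺(n² + 1) > y`.

The prime sum over `p ≡ 1 (mod 4)` is Mertens' theorem twisted by `χ₄`: the partial sums of
`χ₄(m) / m` stay above `1/2`, and Dirichlet's hyperbola method applied to
`χ₄ log = (χ₄ Λ) ⋆ χ₄` bounds `∑_{n ≤ N} χ₄(n) Λ(n) / n`.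
-/

attribute [local instance] Classical.propDecidable

/-- Largest prime factor, with the convention `Pplus 1 = 1`. -/
def Pplus (n : ℕ) : ℕ := max 1 (n.primeFactors.sup id)

open Finset Real Filter Topology ArithmeticFunction ZMod

namespace FriableSquarePlusOne

theorem abs_sum_Ioc_mul_le_of_antitoneOn {a f : ℕ → ℝ} {k : ℕ} {C : ℝ}
    (ha : ∀ M, |∑ m ∈ Ioc k M, a m| ≤ C) (hf : AntitoneOn f (Set.Ioi k))
    (hf₀ : ∀ m, k < m → 0 ≤ f m) (M : ℕ) :
    |∑ m ∈ Ioc k M, a m * f m| ≤ C * f (k + 1) := by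
  rcases lt_or_ge M k with hM | hM
  · simpa [Ioc_eq_empty_of_le hM.le] using
      mul_nonneg ((abs_nonneg _).trans (ha 0)) (hf₀ (k + 1) k.lt_succ_self)
  set S := fun M => ∑ m ∈ Ioc k M, a m
  -- Abel summation: the error term grows by `S (M + 1) * (f (M + 1) - f (M + 2))` at each step.
  have key : ∀ M, k ≤ M → |∑ m ∈ Ioc k M, a m * f m - S M * f (M + 1)|
      ≤ C * (f (k + 1) - f (M + 1)) := by
    intro M hM
    induction M, hM using Nat.le_induction with
    | base => simp [S]
    | succ M hM ih =>
      have hmono : f (M + 1 + 1) ≤ f (M + 1) :=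
        hf (Set.mem_Ioi.2 (by omega)) (Set.mem_Ioi.2 (by omega)) (by omega)
      calc _ = |(∑ m ∈ Ioc k M, a m * f m - S M * f (M + 1))
              + S (M + 1) * (f (M + 1) - f (M + 1 + 1))| := by
            simp only [S, sum_Ioc_succ_top hM]; ring_nf
        _ ≤ C * (f (k + 1) - f (M + 1)) + C * (f (M + 1) - f (M + 1 + 1)) := by
            refine (abs_add_le _ _).trans (add_le_add ih ?_)
            rw [abs_mul, abs_of_nonneg (sub_nonneg.2 hmono)]
            exact mul_le_mul_of_nonneg_right (ha _) (sub_nonneg.2 hmono)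
        _ = C * (f (k + 1) - f (M + 1 + 1)) := by ring
  have hfM := hf₀ (M + 1) (by omega)
  calc |∑ m ∈ Ioc k M, a m * f m|
      = |(∑ m ∈ Ioc k M, a m * f m - S M * f (M + 1)) + S M * f (M + 1)| := by ring_nf
    _ ≤ C * (f (k + 1) - f (M + 1)) + C * f (M + 1) := by
        refine (abs_add_le _ _).trans (add_le_add (key M hM) ?_)
        rw [abs_mul, abs_of_nonneg hfM]
        exact mul_le_mul_of_nonneg_right (ha M) hfM
    _ = C * f (k + 1) := by ring

theorem sum_Ioc_χ₄ (M : ℕ) :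
    ∑ m ∈ Ioc 0 M, (χ₄ m : ℝ) = if M % 4 = 1 ∨ M % 4 = 2 then 1 else 0 := by
  induction M with
  | zero => simp
  | succ M ih =>
    rw [sum_Ioc_succ_top (Nat.zero_le M), ih, χ₄_nat_mod_four,
      show (M + 1) % 4 = (M % 4 + 1) % 4 by omega]
    have : M % 4 < 4 := Nat.mod_lt _ (by norm_num)
    interval_cases M % 4 <;> simp

theorem abs_sum_Ioc_χ₄_le (k M : ℕ) : |∑ m ∈ Ioc k M, (χ₄ m : ℝ)| ≤ 1 := by
  rcases le_total k M with h | h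
  · have := sum_Ioc_consecutive (fun m => (χ₄ m : ℝ)) (Nat.zero_le k) h
    rw [sum_Ioc_χ₄, sum_Ioc_χ₄] at this
    rw [abs_le]
    split_ifs at this <;> constructor <;> linarith
  · rw [Ioc_eq_empty_of_le h, sum_empty, abs_zero]
    exact zero_le_one

noncomputable def partialL (M : ℕ) : ℝ := ∑ m ∈ Ioc 0 M, (χ₄ m : ℝ) / m

theorem abs_partialL_sub_le {M N : ℕ} (h : M ≤ N) :
    |partialL N - partialL M| ≤ 1 / (M + 1) := by
  rw [partialL, partialL, ← sum_Ioc_consecutive _ (Nat.zero_le M) h, add_sub_cancel_left]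
  have hanti : AntitoneOn (fun m : ℕ => 1 / (m : ℝ)) (Set.Ioi M) := fun a ha _ _ hab =>
    one_div_le_one_div_of_le (by exact_mod_cast (Nat.zero_le M).trans_lt ha) (by exact_mod_cast hab)
  have := abs_sum_Ioc_mul_le_of_antitoneOn (abs_sum_Ioc_χ₄_le M) hanti (fun m _ => by positivity) N
  simpa only [one_mul, ← div_eq_mul_one_div, Nat.cast_add, Nat.cast_one] using this

theorem half_le_partialL {N : ℕ} (hN : 1 ≤ N) : 1 / 2 ≤ partialL N := by
  have h₁ : partialL 1 = 1 := by
    rw [partialL, sum_Ioc_succ_top (le_refl 0), Ioc_self, sum_empty, zero_add, zero_add,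
      Nat.cast_one, map_one, Int.cast_one, Nat.cast_one, div_one]
  have h := (abs_le.1 (abs_partialL_sub_le hN)).1
  rw [h₁] at h
  norm_num at h
  linarith

theorem abs_partialL_div_sub_le {N d : ℕ} (hN : 0 < N) (hd : 0 < d) :
    |partialL (N / d) - partialL N| ≤ d / N := by
  rw [abs_sub_comm]
  refine (abs_partialL_sub_le (Nat.div_le_self N d)).trans ?_
  have : (N : ℝ) ≤ ((N / d : ℕ) + 1) * d := by
    exact_mod_cast (Nat.lt_div_mul_add hd).le.trans_eq (by ring)
  rw [div_le_div_iff₀ (by positivity) (by exact_mod_cast hN)]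
  linarith

theorem abs_sum_Ioc_χ₄_mul_log_div_le (N : ℕ) :
    |∑ n ∈ Ioc 0 N, (χ₄ n : ℝ) * (Real.log n / n)| ≤ 1 := by
  -- `log m / m` only decreases from `m = 3` on, but the terms `n = 1, 2` vanish
  rw [← sum_subset (Ioc_subset_Ioc_left (by norm_num : 0 ≤ 2)) fun n hn hn' => by
    obtain rfl | rfl : n = 1 ∨ n = 2 := by simp only [mem_Ioc] at hn hn'; omega
    · simp only [Nat.cast_one, Real.log_one, zero_div, mul_zero]
    · rw [χ₄_nat_eq_if_mod_four]; norm_num]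
  have hanti : AntitoneOn (fun m : ℕ => Real.log m / m) (Set.Ioi 2) := fun a ha b hb hab =>
    have h3 : exp 1 ≤ 3 := (exp_one_lt_d9.trans (by norm_num)).le
    log_div_self_antitoneOn (h3.trans (by exact_mod_cast ha)) (h3.trans (by exact_mod_cast hb))
      (by exact_mod_cast hab)
  refine (abs_sum_Ioc_mul_le_of_antitoneOn (abs_sum_Ioc_χ₄_le 2) hanti
    (fun m _ => by positivity) N).trans ?_
  have := Real.log_le_sub_one_of_pos (show (0 : ℝ) < 3 by norm_num)
  norm_num
  linarith

theorem sum_Ioc_sum_divisorsAntidiagonal {R : Type*} [CommSemiring R] (f g : ℕ → R) (N : ℕ) :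
    ∑ n ∈ Ioc 0 N, ∑ x ∈ n.divisorsAntidiagonal, f x.1 * g x.2
      = ∑ d ∈ Ioc 0 N, f d * ∑ m ∈ Ioc 0 (N / d), g m := by
  have h := sum_Ioc_mul_eq_sum_sum (toArithmeticFunction f) (toArithmeticFunction g) N
  simp only [← LSeries.convolution.eq_1, LSeries.convolution_def] at h
  rw [h]
  refine sum_congr rfl fun d hd => ?_
  have hval (k : ℕ → R) {m : ℕ} (hm : 0 < m) : toArithmeticFunction k m = k m :=
    if_neg hm.ne'
  rw [hval f (mem_Ioc.1 hd).1, sum_congr rfl fun m hm => hval g (mem_Ioc.1 hm).1]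

theorem abs_χ₄_le_one (n : ℕ) : |(χ₄ n : ℝ)| ≤ 1 := by
  rcases isQuadratic_χ₄ n with h | h | h <;> simp [h]

theorem sum_divisorsAntidiagonal_χ₄_mul_vonMangoldt (n : ℕ) :
    ∑ x ∈ n.divisorsAntidiagonal, (χ₄ x.1 : ℝ) * Λ x.1 / x.1 * ((χ₄ x.2 : ℝ) / x.2)
      = χ₄ n * (Real.log n / n) := by
  have hterm : ∀ x ∈ n.divisorsAntidiagonal,
      (χ₄ x.1 : ℝ) * Λ x.1 / x.1 * ((χ₄ x.2 : ℝ) / x.2) = χ₄ n / n * Λ x.1 := by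
    intro x hx
    rw [← (Nat.mem_divisorsAntidiagonal.1 hx).1]
    push_cast [map_mul]
    ring
  rw [sum_congr rfl hterm, ← mul_sum, Nat.sum_divisorsAntidiagonal (fun d _ => Λ d),
    vonMangoldt_sum]
  ring

theorem sum_Ioc_vonMangoldt_le (N : ℕ) : ∑ n ∈ Ioc 0 N, Λ n ≤ (Real.log 4 + 4) * N := by
  simpa [Chebyshev.psi] using Chebyshev.psi_le_const_mul_self (Nat.cast_nonneg (α := ℝ) N)

theorem sum_Ioc_χ₄_mul_log_div_eq (N : ℕ) :
    ∑ n ∈ Ioc 0 N, (χ₄ n : ℝ) * (Real.log n / n)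
      = ∑ d ∈ Ioc 0 N, (χ₄ d : ℝ) * Λ d / d * partialL (N / d) := by
  simp only [partialL]
  rw [← sum_Ioc_sum_divisorsAntidiagonal]
  exact sum_congr rfl fun n _ => (sum_divisorsAntidiagonal_χ₄_mul_vonMangoldt n).symm

theorem abs_sum_Ioc_χ₄_mul_vonMangoldt_div_mul_sub_le {N : ℕ} (hN : 0 < N) :
    |∑ d ∈ Ioc 0 N, (χ₄ d : ℝ) * Λ d / d * (partialL (N / d) - partialL N)|
      ≤ Real.log 4 + 4 := by
  have hN₀ : (0 : ℝ) < N := by exact_mod_cast hN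
  refine (abs_sum_le_sum_abs _ _).trans ?_
  calc ∑ d ∈ Ioc 0 N, |(χ₄ d : ℝ) * Λ d / d * (partialL (N / d) - partialL N)|
      ≤ ∑ d ∈ Ioc 0 N, Λ d / N := by
        refine sum_le_sum fun d hd => ?_
        calc |(χ₄ d : ℝ) * Λ d / d * (partialL (N / d) - partialL N)|
            = |(χ₄ d : ℝ)| * (Λ d / d) * |partialL (N / d) - partialL N| := by
              rw [abs_mul, abs_div, abs_mul, abs_of_nonneg vonMangoldt_nonneg, Nat.abs_cast,
                mul_div_assoc]
          _ ≤ 1 * (Λ d / d) * (d / N) := by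
              gcongr
              · exact abs_χ₄_le_one d
              · exact abs_partialL_div_sub_le hN (mem_Ioc.1 hd).1
          _ = Λ d / N := by
              have : (d : ℝ) ≠ 0 := by exact_mod_cast (mem_Ioc.1 hd).1.ne'
              field_simp
    _ ≤ Real.log 4 + 4 := by
        rw [← sum_div, div_le_iff₀ hN₀]
        exact sum_Ioc_vonMangoldt_le N

theorem abs_sum_Ioc_χ₄_mul_vonMangoldt_div_le {N : ℕ} (hN : 1 ≤ N) :
    |∑ d ∈ Ioc 0 N, (χ₄ d : ℝ) * Λ d / d| ≤ 2 * (Real.log 4 + 5) := by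
  set A := ∑ d ∈ Ioc 0 N, (χ₄ d : ℝ) * Λ d / d
  have hL := half_le_partialL hN
  have hsplit : partialL N * A = ∑ n ∈ Ioc 0 N, (χ₄ n : ℝ) * (Real.log n / n)
      - ∑ d ∈ Ioc 0 N, (χ₄ d : ℝ) * Λ d / d * (partialL (N / d) - partialL N) := by
    rw [sum_Ioc_χ₄_mul_log_div_eq, ← sum_sub_distrib, mul_sum]
    exact sum_congr rfl fun d _ => by ring
  have : partialL N * |A| ≤ Real.log 4 + 5 := by
    rw [← abs_of_pos (one_half_pos.trans_le hL), ← abs_mul, hsplit]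
    refine (abs_sub _ _).trans ?_
    linarith [abs_sum_Ioc_χ₄_mul_log_div_le N, abs_sum_Ioc_χ₄_mul_vonMangoldt_div_mul_sub_le hN]
  nlinarith [abs_nonneg A]

theorem summable_vonMangoldt_div_of_not_prime :
    Summable fun n : ℕ => (if n.Prime then 0 else Λ n) / n := by
  convert vonMangoldt.summable_residueClass_non_primes_div (0 : ZMod 1) using 3 with n
  simp [Subsingleton.elim (n : ZMod 1) 0]

theorem exists_sum_Ioc_vonMangoldt_div_of_not_prime_le :
    ∃ C, ∀ N, ∑ n ∈ Ioc 0 N with ¬ n.Prime, Λ n / n ≤ C := by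
  refine ⟨∑' n : ℕ, (if n.Prime then 0 else Λ n) / n, fun N => ?_⟩
  calc ∑ n ∈ Ioc 0 N with ¬ n.Prime, Λ n / n
      = ∑ n ∈ Ioc 0 N, (if n.Prime then 0 else Λ n) / n := by
        rw [sum_filter]
        exact sum_congr rfl fun n _ => by split_ifs <;> simp
    _ ≤ _ := summable_vonMangoldt_div_of_not_prime.sum_le_tsum _ fun n _ =>
        div_nonneg (by split_ifs; exacts [le_rfl, vonMangoldt_nonneg]) n.cast_nonneg

theorem sum_Ioc_log_eq_sum_vonMangoldt_mul_div (N : ℕ) :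
    ∑ n ∈ Ioc 0 N, Real.log n = ∑ d ∈ Ioc 0 N, Λ d * (N / d : ℕ) := by
  have h := sum_Ioc_sum_divisorsAntidiagonal (fun d => Λ d) (fun _ => (1 : ℝ)) N
  simp only [mul_one, sum_const, Nat.card_Ioc, tsub_zero, nsmul_eq_mul] at h
  rw [← h]
  exact sum_congr rfl fun n _ => by
    rw [Nat.sum_divisorsAntidiagonal (fun d _ => Λ d), vonMangoldt_sum]

theorem sum_Ioc_log_eq_log_factorial (N : ℕ) :
    ∑ n ∈ Ioc 0 N, Real.log n = Real.log N.factorial := by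
  induction N with
  | zero => simp
  | succ N ih =>
    rw [sum_Ioc_succ_top (Nat.zero_le N), ih, Nat.factorial_succ, Nat.cast_mul,
      Real.log_mul (by positivity) (by positivity), add_comm]

theorem log_sub_one_le_sum_Ioc_vonMangoldt_div {N : ℕ} (hN : 1 ≤ N) :
    Real.log N - 1 ≤ ∑ n ∈ Ioc 0 N, Λ n / n := by
  have hN₀ : (0 : ℝ) < N := by exact_mod_cast hN
  have hfact : N * Real.log N - N ≤ Real.log N.factorial := by
    have := Real.log_le_log (by positivity) (Real.pow_div_factorial_le_exp (N : ℝ) hN₀.le N)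
    rw [Real.log_div (by positivity) (by positivity), Real.log_pow, Real.log_exp] at this
    linarith
  have hdiv : ∑ d ∈ Ioc 0 N, Λ d * (N / d : ℕ) ≤ N * ∑ n ∈ Ioc 0 N, Λ n / n := by
    rw [mul_sum]
    refine sum_le_sum fun d hd => ?_
    calc Λ d * (N / d : ℕ) ≤ Λ d * (N / d) :=
          mul_le_mul_of_nonneg_left Nat.cast_div_le vonMangoldt_nonneg
      _ = N * (Λ d / d) := by ring
  rw [← sum_Ioc_log_eq_log_factorial, sum_Ioc_log_eq_sum_vonMangoldt_mul_div] at hfact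
  nlinarith

theorem exists_log_sub_le_sum_prime_one_add_χ₄_mul_log_div :
    ∃ C, ∀ N : ℕ, 1 ≤ N → Real.log N - C
      ≤ ∑ p ∈ Ioc 0 N with p.Prime, (1 + (χ₄ p : ℝ)) * (Real.log p / p) := by
  obtain ⟨C, hC⟩ := exists_sum_Ioc_vonMangoldt_div_of_not_prime_le
  refine ⟨1 + 2 * (Real.log 4 + 5) + 2 * C, fun N hN => ?_⟩
  have hall : Real.log N - 1 - 2 * (Real.log 4 + 5)
      ≤ ∑ n ∈ Ioc 0 N, (1 + (χ₄ n : ℝ)) * (Λ n / n) := by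
    have hχ := (abs_le.1 (abs_sum_Ioc_χ₄_mul_vonMangoldt_div_le hN)).1
    have := log_sub_one_le_sum_Ioc_vonMangoldt_div hN
    have hsplit : ∑ n ∈ Ioc 0 N, (1 + (χ₄ n : ℝ)) * (Λ n / n)
        = ∑ n ∈ Ioc 0 N, Λ n / n + ∑ n ∈ Ioc 0 N, (χ₄ n : ℝ) * Λ n / n := by
      rw [← sum_add_distrib]
      exact sum_congr rfl fun n _ => by ring
    linarith
  have hprime : ∑ p ∈ Ioc 0 N with p.Prime, (1 + (χ₄ p : ℝ)) * (Λ p / p)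
      = ∑ p ∈ Ioc 0 N with p.Prime, (1 + (χ₄ p : ℝ)) * (Real.log p / p) :=
    sum_congr rfl fun p hp => by rw [vonMangoldt_apply_prime (mem_filter.1 hp).2]
  have hcomposite : ∑ n ∈ Ioc 0 N with ¬ n.Prime, (1 + (χ₄ n : ℝ)) * (Λ n / n) ≤ 2 * C := by
    refine (sum_le_sum fun n _ => ?_).trans ((mul_sum _ _ _).symm.le.trans
      (mul_le_mul_of_nonneg_left (hC N) zero_le_two))
    have := (abs_le.1 (abs_χ₄_le_one n)).2
    exact mul_le_mul_of_nonneg_right (by linarith) (div_nonneg vonMangoldt_nonneg n.cast_nonneg)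
  rw [← sum_filter_add_sum_filter_not _ Nat.Prime, hprime] at hall
  linarith

theorem one_add_χ₄_mul_log_div_le {p : ℕ} (hp : p.Prime) :
    (1 + (χ₄ p : ℝ)) * (Real.log p / p)
      ≤ 2 * (if p % 4 = 1 then Real.log p / p else 0) + if p = 2 then 1 else 0 := by
  rcases hp.eq_two_or_odd' with rfl | hodd
  · have := Real.log_le_sub_one_of_pos (show (0 : ℝ) < 2 by norm_num)
    rw [χ₄_nat_eq_if_mod_four]
    norm_num
    linarith
  · have hp2 : p ≠ 2 := by rintro rfl; exact absurd hodd (by decide)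
    obtain h | h : p % 4 = 1 ∨ p % 4 = 3 := by
      rcases hodd with ⟨k, rfl⟩; omega
    · rw [χ₄_nat_one_mod_four h, if_pos h, if_neg hp2]
      norm_num
    · rw [χ₄_nat_three_mod_four h, if_neg (by omega), if_neg hp2]
      norm_num

theorem exists_half_log_sub_le_sum_prime_mod_four_eq_one :
    ∃ C, ∀ N : ℕ, 1 ≤ N → Real.log N / 2 - C
      ≤ ∑ p ∈ Ioc 0 N with p.Prime ∧ p % 4 = 1, Real.log p / p := by
  obtain ⟨C, hC⟩ := exists_log_sub_le_sum_prime_one_add_χ₄_mul_log_div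
  refine ⟨(C + 1) / 2, fun N hN => ?_⟩
  have h := (hC N hN).trans (sum_le_sum fun p hp => one_add_χ₄_mul_log_div_le (mem_filter.1 hp).2)
  rw [sum_add_distrib, ← mul_sum, ← sum_filter, filter_filter, sum_ite_eq'] at h
  have : (if 2 ∈ {p ∈ Ioc 0 N | p.Prime} then (1 : ℝ) else 0) ≤ 1 := by split_ifs <;> norm_num
  linarith

theorem div_sub_one_le_card_filter_natCast_eq {p : ℕ} [NeZero p] (N : ℕ) (z : ZMod p) :
    (N : ℝ) / p - 1 ≤ #{n ∈ Ioc 0 N | ((n : ℕ) : ZMod p) = z} := by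
  have hp : 0 < p := Nat.pos_of_ne_zero (NeZero.ne p)
  have hcard := Nat.Ioc_filter_modEq_card 0 N hp z.val
  simp only [← ZMod.natCast_eq_natCast_iff, ZMod.natCast_zmod_val] at hcard
  have hfloor : ⌊((N : ℚ) - z.val) / p⌋ - ⌊((0 : ℕ) - (z.val : ℚ)) / p⌋
      ≤ (#{n ∈ Ioc 0 N | ((n : ℕ) : ZMod p) = z} : ℤ) := hcard ▸ le_max_left _ _
  have hq : (N : ℚ) / p - 1 ≤ #{n ∈ Ioc 0 N | ((n : ℕ) : ZMod p) = z} := by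
    have h₁ := Int.sub_one_lt_floor (((N : ℚ) - z.val) / p)
    have h₂ := Int.floor_le (((0 : ℕ) - (z.val : ℚ)) / p)
    have h₃ : ((N : ℚ) - z.val) / p - ((0 : ℕ) - (z.val : ℚ)) / p = N / p := by
      push_cast; ring
    have : ((⌊((N : ℚ) - z.val) / p⌋ - ⌊((0 : ℕ) - (z.val : ℚ)) / p⌋ : ℤ) : ℚ)
        ≤ #{n ∈ Ioc 0 N | ((n : ℕ) : ZMod p) = z} := by exact_mod_cast hfloor
    push_cast at this
    linarith
  have := (Rat.cast_le (K := ℝ)).2 hq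
  push_cast at this
  exact this

theorem two_mul_div_sub_two_le_card_filter_dvd_sq_add_one {p : ℕ} (hp : p.Prime)
    (hp4 : p % 4 = 1) (N : ℕ) :
    2 * (N : ℝ) / p - 2 ≤ #{n ∈ Ioc 0 N | p ∣ n ^ 2 + 1} := by
  have := Fact.mk hp
  obtain ⟨z, hz⟩ := ZMod.exists_sq_eq_neg_one_iff.2 (by omega : p % 4 ≠ 3)
  have hz₀ : z ≠ 0 := by rintro rfl; simp at hz
  have hzz : z ≠ -z := fun h => by
    rcases (ZMod.neg_eq_self_iff z).1 h.symm with h | h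
    · exact hz₀ h
    · omega
  set A := {n ∈ Ioc 0 N | ((n : ℕ) : ZMod p) = z}
  set B := {n ∈ Ioc 0 N | ((n : ℕ) : ZMod p) = -z}
  have hsub : A ∪ B ⊆ {n ∈ Ioc 0 N | p ∣ n ^ 2 + 1} := by
    intro n hn
    simp only [A, B, mem_union, mem_filter] at hn ⊢
    refine ⟨hn.elim And.left And.left, (ZMod.natCast_eq_zero_iff _ p).1 ?_⟩
    rcases hn with ⟨-, h⟩ | ⟨-, h⟩ <;> push_cast <;> rw [h] <;> linear_combination -hz
  have hcard : (#A : ℝ) + #B ≤ #{n ∈ Ioc 0 N | p ∣ n ^ 2 + 1} := by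
    rw [← Nat.cast_add, ← card_union_of_disjoint
      (disjoint_filter.2 fun n _ h₁ h₂ => hzz (h₁.symm.trans h₂))]
    exact_mod_cast card_le_card hsub
  linarith [div_sub_one_le_card_filter_natCast_eq N z, div_sub_one_le_card_filter_natCast_eq N (-z),
    show 2 * (N : ℝ) / p = N / p + N / p by ring]

theorem exists_mem_primeFactors_lt_of_lt_Pplus {m : ℕ} {y : ℝ} (hy : 1 ≤ y)
    (h : y < Pplus m) : ∃ q ∈ m.primeFactors, y < q := by
  rcases m.primeFactors.eq_empty_or_nonempty with h₀ | hne
  · simp only [Pplus, h₀, sup_empty, bot_eq_zero', zero_le, max_eq_left, Nat.cast_one] at h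
    linarith
  · obtain ⟨q, hq, hsup⟩ := exists_mem_eq_sup _ hne id
    rw [Pplus, hsup, id_eq, max_eq_right (Nat.prime_of_mem_primeFactors hq).one_lt.le] at h
    exact ⟨q, hq, h⟩

theorem sum_log_le_log_of_subset_primeFactors {m : ℕ} (hm : m ≠ 0) {s : Finset ℕ}
    (hs : s ⊆ m.primeFactors) : ∑ p ∈ s, Real.log p ≤ Real.log m := by
  have hprime : ∀ p ∈ s, p.Prime := fun p hp => Nat.prime_of_mem_primeFactors (hs hp)
  have hdvd : ∏ p ∈ s, p ∣ m :=
    (prod_dvd_prod_of_subset _ _ id hs).trans (Nat.prod_primeFactors_dvd m)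
  have hpos : 0 < ∏ p ∈ s, p :=
    Nat.pos_of_ne_zero (prod_ne_zero_iff.2 fun p hp => (hprime p hp).ne_zero)
  rw [← Real.log_prod fun p hp => by exact_mod_cast (hprime p hp).ne_zero, ← Nat.cast_prod]
  exact Real.log_le_log (by exact_mod_cast hpos)
    (by exact_mod_cast Nat.le_of_dvd (Nat.pos_of_ne_zero hm) hdvd)

theorem sum_log_add_ite_le_log {m N : ℕ} (hm : m ≠ 0) {P : Finset ℕ}
    (hP : ∀ p ∈ P, p.Prime ∧ p ≤ N) {y : ℝ} (hNy : N < y) (hy : 1 ≤ y) :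
    ∑ p ∈ P with p ∣ m, Real.log p + (if y < Pplus m then Real.log y else 0) ≤ Real.log m := by
  have hsub : {p ∈ P | p ∣ m} ⊆ m.primeFactors := fun p hp => by
    obtain ⟨hpP, hpm⟩ := mem_filter.1 hp
    exact Nat.mem_primeFactors.2 ⟨(hP p hpP).1, hpm, hm⟩
  split_ifs with hbig
  · obtain ⟨q, hq, hyq⟩ := exists_mem_primeFactors_lt_of_lt_Pplus hy hbig
    have hqP : q ∉ {p ∈ P | p ∣ m} := fun hq' => by
      have : (q : ℝ) ≤ N := by exact_mod_cast (hP q (mem_filter.1 hq').1).2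
      linarith
    have := sum_log_le_log_of_subset_primeFactors hm (insert_subset hq hsub)
    rw [sum_insert hqP] at this
    linarith [Real.log_le_log (by linarith) hyq.le]
  · simpa using sum_log_le_log_of_subset_primeFactors hm hsub

theorem sum_log_mul_card_dvd_add_card_lt_Pplus_mul_log_le (f : ℕ → ℕ) (hf : ∀ n, f n ≠ 0)
    {N : ℕ} {P : Finset ℕ} (hP : ∀ p ∈ P, p.Prime ∧ p ≤ N) {y : ℝ} (hNy : N < y) (hy : 1 ≤ y) :
    ∑ p ∈ P, Real.log p * #{n ∈ Ioc 0 N | p ∣ f n}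
      + #{n ∈ Ioc 0 N | y < Pplus (f n)} * Real.log y ≤ ∑ n ∈ Ioc 0 N, Real.log (f n) := by
  have h := sum_le_sum fun n (_ : n ∈ Ioc 0 N) => sum_log_add_ite_le_log (hf n) hP hNy hy
  have hsmall : ∑ n ∈ Ioc 0 N, ∑ p ∈ P with p ∣ f n, Real.log p
      = ∑ p ∈ P, Real.log p * #{n ∈ Ioc 0 N | p ∣ f n} := by
    simp only [sum_filter]
    rw [sum_comm]
    exact sum_congr rfl fun p _ => by rw [← sum_filter, sum_const, nsmul_eq_mul, mul_comm]
  have hlarge : ∑ n ∈ Ioc 0 N, (if y < Pplus (f n) then Real.log y else 0)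
      = #{n ∈ Ioc 0 N | y < Pplus (f n)} * Real.log y := by
    rw [← sum_filter, sum_const, nsmul_eq_mul]
  rwa [sum_add_distrib, hsmall, hlarge] at h

theorem sum_Ioc_log_sq_add_one_le (N : ℕ) :
    ∑ n ∈ Ioc 0 N, Real.log ((n ^ 2 + 1 : ℕ) : ℝ) ≤ N * (Real.log 2 + 2 * Real.log N) := by
  have hterm : ∀ n ∈ Ioc 0 N, Real.log ((n ^ 2 + 1 : ℕ) : ℝ) ≤ Real.log 2 + 2 * Real.log N := by
    intro n hn
    have h1 : (1 : ℝ) ≤ n := by exact_mod_cast (mem_Ioc.1 hn).1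
    have hnN : (n : ℝ) ≤ N := by exact_mod_cast (mem_Ioc.1 hn).2
    calc Real.log ((n ^ 2 + 1 : ℕ) : ℝ) ≤ Real.log (2 * (N : ℝ) ^ 2) := by
          push_cast
          exact Real.log_le_log (by positivity) (by nlinarith)
      _ = Real.log 2 + 2 * Real.log N := by
          rw [Real.log_mul two_ne_zero (pow_ne_zero _ (by linarith)), Real.log_pow]
          push_cast; ring
  have := sum_le_card_nsmul _ _ _ hterm
  rwa [Nat.card_Ioc, tsub_zero, nsmul_eq_mul] at this

theorem sum_Ioc_prime_log_le (N : ℕ) : ∑ p ∈ Ioc 0 N with p.Prime, Real.log p ≤ Real.log 4 * N := by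
  simpa [Chebyshev.theta] using Chebyshev.theta_le_log4_mul_x (Nat.cast_nonneg (α := ℝ) N)

theorem exists_card_filter_lt_Pplus_sq_add_one_mul_log_le :
    ∃ C, 0 ≤ C ∧ ∀ N : ℕ, ∀ y : ℝ, 1 ≤ N → N < y →
      #{n ∈ Ioc 0 N | y < Pplus (n ^ 2 + 1)} * Real.log y ≤ N * (Real.log N + C) := by
  obtain ⟨C, hC⟩ := exists_half_log_sub_le_sum_prime_mod_four_eq_one
  refine ⟨Real.log 2 + 2 * Real.log 4 + 2 * |C|, by positivity, fun N y hN hNy => ?_⟩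
  set P := {p ∈ Ioc 0 N | p.Prime ∧ p % 4 = 1}
  have hP : ∀ p ∈ P, p.Prime ∧ p ≤ N := fun p hp => by
    simp only [P, mem_filter, mem_Ioc] at hp
    exact ⟨hp.2.1, hp.1.2⟩
  have h := sum_log_mul_card_dvd_add_card_lt_Pplus_mul_log_le (fun n => n ^ 2 + 1)
    (fun n => Nat.succ_ne_zero _) hP hNy (le_trans (by exact_mod_cast hN) hNy.le)
  have hupper := sum_Ioc_log_sq_add_one_le N
  have hlower : N * Real.log N - (2 * Real.log 4 + 2 * |C|) * N
      ≤ ∑ p ∈ P, Real.log p * #{n ∈ Ioc 0 N | p ∣ n ^ 2 + 1} := by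
    have hcount : ∀ p ∈ P, Real.log p * (2 * N / p - 2)
        ≤ Real.log p * #{n ∈ Ioc 0 N | p ∣ n ^ 2 + 1} := fun p hp =>
      mul_le_mul_of_nonneg_left (two_mul_div_sub_two_le_card_filter_dvd_sq_add_one
        (mem_filter.1 hp).2.1 (mem_filter.1 hp).2.2 N) (Real.log_natCast_nonneg p)
    have hθ : ∑ p ∈ P, Real.log p ≤ Real.log 4 * N :=
      (sum_le_sum_of_subset_of_nonneg (monotone_filter_right _ fun p _ hp => hp.1)
        fun p _ _ => Real.log_natCast_nonneg p).trans (sum_Ioc_prime_log_le N)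
    have hsum : ∑ p ∈ P, Real.log p * (2 * N / p - 2)
        = 2 * N * ∑ p ∈ P, Real.log p / p - 2 * ∑ p ∈ P, Real.log p := by
      rw [mul_sum, mul_sum, ← sum_sub_distrib]
      exact sum_congr rfl fun p _ => by ring
    have hmertens := hC N hN
    have hN₀ : (0 : ℝ) ≤ N := N.cast_nonneg
    have := sum_le_sum hcount
    rw [hsum] at this
    nlinarith [le_abs_self C]
  nlinarith

theorem exists_card_filter_lt_Pplus_sq_add_one_le :
    ∃ C, ∀ x y : ℝ, 2 ≤ x → x < y → (#{n ∈ Ioc 0 ⌊x⌋₊ | y < Pplus (n ^ 2 + 1)} : ℝ)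
      ≤ Real.log x / Real.log y * x + C * x / Real.log x := by
  obtain ⟨C, hC₀, hC⟩ := exists_card_filter_lt_Pplus_sq_add_one_mul_log_le
  refine ⟨C, fun x y hx hxy => ?_⟩
  have hlogx : 0 < Real.log x := Real.log_pos (by linarith)
  have hlogy : Real.log x ≤ Real.log y := Real.log_le_log (by linarith) hxy.le
  have hN : 1 ≤ ⌊x⌋₊ := Nat.one_le_floor_iff _ |>.2 (by linarith)
  have hNx : (⌊x⌋₊ : ℝ) ≤ x := Nat.floor_le (by linarith)
  have h := (hC ⌊x⌋₊ y hN (hNx.trans_lt hxy)).trans (mul_le_mul hNx (add_le_add_left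
    (Real.log_le_log (by exact_mod_cast hN) hNx) C) (by positivity) (by linarith))
  rw [← le_div_iff₀ (hlogx.trans_le hlogy)] at h
  calc _ ≤ x * (Real.log x + C) / Real.log y := h
    _ = Real.log x / Real.log y * x + C * x / Real.log y := by ring
    _ ≤ Real.log x / Real.log y * x + C * x / Real.log x := by gcongr

end FriableSquarePlusOne

open FriableSquarePlusOne

/-- Friable values of `n² + 1` (Théorème 1.4). -/
theorem friable_values_n_sq_add_one (ε : ℝ) (hε : 0 < ε) :
    ∃ x₀ : ℝ, ∀ x : ℝ, x₀ ≤ x → ∀ y : ℝ, x < y → y ≤ x ^ 2 →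
      ∀ u : ℝ, u = Real.log x / Real.log y →
      (1 - u - ε) * x ≤
        (((Finset.Icc 1 ⌊x⌋₊).filter (fun n => (Pplus (n ^ 2 + 1) : ℝ) ≤ y)).card : ℝ) := by
  obtain ⟨C, hC⟩ := exists_card_filter_lt_Pplus_sq_add_one_le
  have hlim : Tendsto (fun x : ℝ => x⁻¹ + C / Real.log x) atTop (𝓝 0) := by
    simpa [div_eq_mul_inv] using
      tendsto_inv_atTop_zero.add (tendsto_log_atTop.inv_tendsto_atTop.const_mul C)
  obtain ⟨x₁, hx₁⟩ := eventually_atTop.1 ((tendsto_order.1 hlim).2 ε hε)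
  refine ⟨max x₁ 2, fun x hx y hxy _ u hu => ?_⟩
  have hx₂ : 2 ≤ x := le_of_max_le_right hx
  have hbad := hC x y hx₂ hxy
  have hsplit : (#{n ∈ Icc 1 ⌊x⌋₊ | (Pplus (n ^ 2 + 1) : ℝ) ≤ y} : ℝ)
      + #{n ∈ Ioc 0 ⌊x⌋₊ | y < Pplus (n ^ 2 + 1)} = ⌊x⌋₊ := by
    simp only [← not_le]
    exact_mod_cast (card_filter_add_card_filter_not (s := Ioc 0 ⌊x⌋₊) _).trans
      (Nat.card_Ioc 0 ⌊x⌋₊)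
  have hsmall : 1 + C * x / Real.log x < ε * x := by
    have := mul_lt_mul_of_pos_right (hx₁ x (le_of_max_le_left hx)) (by linarith : 0 < x)
    rwa [add_mul, inv_mul_cancel₀ (by linarith), div_mul_eq_mul_div] at this
  have hxN : x < ⌊x⌋₊ + 1 := Nat.lt_floor_add_one x
  rw [hu]
  linarith
end

section
/- Let u > 0 and v be reals with 0 ≤ v < min(1,u), and let k ≥ 2 be an integer. Then u·μ_k(u,v) = 0 if 0 < u ≤ 1, and u·μ_k(u,v) = ∫_{max(1,u−1)}^{u} μ_{k−1}(s,v) ds if u > 1. -/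
open MeasureTheory

/-- The region `V_k(u,v)`. -/
def Vk (k : ℕ) (u v : ℝ) : Set (Fin k → ℝ) :=
  {t | (∀ i, t i ∈ Set.Ioo (0:ℝ) 1) ∧
    (∑ i ∈ Finset.univ.filter (fun i : Fin k => (i : ℕ) < k - 1), t i) < u - 1 ∧
    u - 1 < ∑ i, t i ∧ ∑ i, t i < u - v}

/-- The function `μ_k(u,v)`. -/
noncomputable def muk (k : ℕ) (u v : ℝ) : ℝ :=
  if k = 1 then
    u⁻¹ * (volume (Set.Ioo (0:ℝ) 1 ∩ Set.Ioo (u-1) (u-v))).toReal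
  else
    u⁻¹ * ∫ t in Vk k u v,
      ∏ j ∈ Finset.univ.filter (fun j : Fin k => (j : ℕ) < k - 1),
        (u - ∑ i ∈ Finset.univ.filter (fun i : Fin k => i ≤ j), t i)⁻¹

/-- `μ^{(κ)}(u,v) = ∑_{k ≥ 1} κ^k μ_k(u,v)`. -/
noncomputable def mukappa (κ u v : ℝ) : ℝ := ∑' k : ℕ, κ ^ (k+1) * muk (k+1) u v

/-!
Splitting off the first coordinate `x = t₁`, the slice of `V_{n+1}(u,v)` over `x ∈ (0,1)` is
`V_n(u-x,v)`, and the integrand factors as `(u-x)⁻¹ f_{n-1}(u-x; ·)`. Fubini therefore gives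
`u μ_{n+1}(u,v) = ∫₀¹ μ_n(u-x,v) dx`, where only `x < u-1` contributes: a point of `V_n(s,v)`
forces `1 < s`, because the partial sum `t₁+⋯+t_{n-1}` is nonnegative. Substituting `s = u-x`
yields the integral over `(max(1,u-1), u)`; the same emptiness argument gives `μ_k(u,v) = 0` for
`u ≤ 1`.
-/

open Set

-- `f_{k-1}(u; t₁,…,t_{k-1})`, as a function of all `k` coordinates.
noncomputable def mukIntegrand (k : ℕ) (u : ℝ) (t : Fin k → ℝ) : ℝ :=
  ∏ j ∈ Finset.univ.filter (fun j : Fin k => (j : ℕ) < k - 1),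
    (u - ∑ i ∈ Finset.univ.filter (fun i : Fin k => i ≤ j), t i)⁻¹

lemma muk_of_ne_one {k : ℕ} (hk : k ≠ 1) (u v : ℝ) :
    muk k u v = u⁻¹ * ∫ t in Vk k u v, mukIntegrand k u t := by
  rw [muk, if_neg hk]; rfl

lemma measurableSet_Vk (k : ℕ) (u v : ℝ) : MeasurableSet (Vk k u v) := by
  have hbox : MeasurableSet {t : Fin k → ℝ | ∀ i, t i ∈ Ioo (0:ℝ) 1} := by
    simp_rw [ofPred_forall]
    exact .iInter fun i => measurable_pi_apply i measurableSet_Ioo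
  have hsum (s : Finset (Fin k)) : Measurable fun t : Fin k → ℝ => ∑ i ∈ s, t i :=
    Finset.measurable_sum _ fun i _ => measurable_pi_apply i
  exact hbox.inter <| (measurableSet_lt (hsum _) measurable_const).inter <|
    (measurableSet_lt measurable_const (hsum _)).inter (measurableSet_lt (hsum _) measurable_const)

lemma measurable_mukIntegrand (k : ℕ) (u : ℝ) : Measurable (mukIntegrand k u) :=
  Finset.measurable_prod _ fun _ _ =>
    (measurable_const.sub (Finset.measurable_sum _ fun i _ => measurable_pi_apply i)).inv

lemma one_lt_of_mem_Vk {k : ℕ} {u v : ℝ} {t : Fin k → ℝ} (ht : t ∈ Vk k u v) : 1 < u := by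
  obtain ⟨hbox, hhead, -⟩ := ht
  have := Finset.sum_nonneg fun i (_ : i ∈ Finset.univ.filter fun i : Fin k => (i : ℕ) < k - 1) =>
    (hbox i).1.le
  linarith

lemma Vk_eq_empty {k : ℕ} {u : ℝ} (hu : u ≤ 1) (v : ℝ) : Vk k u v = ∅ :=
  eq_empty_of_forall_notMem fun _ ht => (one_lt_of_mem_Vk ht).not_ge hu

lemma mukIntegrand_mem_Icc {k : ℕ} {u v : ℝ} {t : Fin k → ℝ} (ht : t ∈ Vk k u v) :
    mukIntegrand k u t ∈ Icc 0 1 := by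
  obtain ⟨hbox, hhead, -⟩ := ht
  have hfactor : ∀ j ∈ Finset.univ.filter (fun j : Fin k => (j : ℕ) < k - 1),
      1 ≤ u - ∑ i ∈ Finset.univ.filter (fun i : Fin k => i ≤ j), t i := by
    intro j hj
    have hsub : Finset.univ.filter (fun i : Fin k => i ≤ j)
        ⊆ Finset.univ.filter (fun i : Fin k => (i : ℕ) < k - 1) := by
      intro i hi
      simp only [Finset.mem_filter, Finset.mem_univ, true_and] at hi hj ⊢
      exact lt_of_le_of_lt (Fin.le_iff_val_le_val.mp hi) hj
    have := Finset.sum_le_sum_of_subset_of_nonneg hsub fun i _ _ => (hbox i).1.le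
    linarith
  exact ⟨Finset.prod_nonneg fun j hj => inv_nonneg.mpr (zero_le_one.trans (hfactor j hj)),
    Finset.prod_le_one (fun j hj => inv_nonneg.mpr (zero_le_one.trans (hfactor j hj)))
      fun j hj => inv_le_one_of_one_le₀ (hfactor j hj)⟩

lemma integrableOn_mukIntegrand (k : ℕ) (u v : ℝ) :
    IntegrableOn (mukIntegrand k u) (Vk k u v) := by
  have hbox : Vk k u v ⊆ univ.pi fun _ => Ioo 0 1 := fun t ht i _ => ht.1 i
  have hvol : volume (Vk k u v) < ⊤ :=
    (measure_mono hbox).trans_lt (by simp [Real.volume_pi_Ioo])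
  refine IntegrableOn.of_bound hvol (measurable_mukIntegrand k u).aestronglyMeasurable 1 ?_
  refine ae_restrict_of_forall_mem (measurableSet_Vk k u v) fun t ht => ?_
  obtain ⟨h0, h1⟩ := mukIntegrand_mem_Icc ht
  rwa [Real.norm_of_nonneg h0]

lemma sum_filter_lt_pred_cons {n : ℕ} (hn : 1 ≤ n) (x : ℝ) (y : Fin n → ℝ) :
    ∑ i ∈ Finset.univ.filter (fun i : Fin (n + 1) => (i : ℕ) < n + 1 - 1), Fin.cons x y i
      = x + ∑ i ∈ Finset.univ.filter (fun i : Fin n => (i : ℕ) < n - 1), y i := by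
  rw [Finset.sum_filter, Finset.sum_filter, Fin.sum_univ_succ]
  simp only [Fin.cons_zero, Fin.cons_succ, Fin.val_succ, Fin.val_zero]
  rw [if_pos (by omega)]
  exact congrArg _ (Finset.sum_congr rfl fun i _ => if_congr (by omega) rfl rfl)

lemma sum_filter_le_succ_cons {n : ℕ} (x : ℝ) (y : Fin n → ℝ) (j : Fin n) :
    ∑ i ∈ Finset.univ.filter (fun i : Fin (n + 1) => i ≤ j.succ), Fin.cons x y i
      = x + ∑ i ∈ Finset.univ.filter (fun i : Fin n => i ≤ j), y i := by
  rw [Finset.sum_filter, Finset.sum_filter, Fin.sum_univ_succ]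
  simp only [Fin.cons_zero, Fin.cons_succ, Fin.succ_le_succ_iff, if_pos (Fin.zero_le _)]

lemma cons_mem_Vk_iff {n : ℕ} (hn : 1 ≤ n) (u v x : ℝ) (y : Fin n → ℝ) :
    Fin.cons x y ∈ Vk (n + 1) u v ↔ x ∈ Ioo 0 1 ∧ y ∈ Vk n (u - x) v := by
  simp only [Vk, mem_ofPred_eq, Fin.forall_fin_succ, Fin.cons_zero, Fin.cons_succ,
    Fin.sum_cons, sum_filter_lt_pred_cons hn]
  constructor
  · rintro ⟨⟨hx, hy⟩, h1, h2, h3⟩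
    exact ⟨hx, hy, by linarith, by linarith, by linarith⟩
  · rintro ⟨hx, hy, h1, h2, h3⟩
    exact ⟨⟨hx, hy⟩, by linarith, by linarith, by linarith⟩

lemma mukIntegrand_cons {n : ℕ} (hn : 1 ≤ n) (u x : ℝ) (y : Fin n → ℝ) :
    mukIntegrand (n + 1) u (Fin.cons x y) = (u - x)⁻¹ * mukIntegrand n (u - x) y := by
  have hfirst : ∑ i ∈ Finset.univ.filter (fun i : Fin (n + 1) => i ≤ 0), Fin.cons x y i = x := by
    simp [Finset.filter_eq']
  rw [mukIntegrand, mukIntegrand, Finset.prod_filter, Finset.prod_filter, Fin.prod_univ_succ,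
    if_pos (show ((0 : Fin (n + 1)) : ℕ) < n + 1 - 1 by simp; omega), hfirst]
  refine congrArg _ (Finset.prod_congr rfl fun j _ => ?_)
  rw [sum_filter_le_succ_cons, sub_sub]
  exact if_congr (by simp only [Fin.val_succ]; omega) rfl rfl

lemma integral_eq_integral_integral_cons {α E : Type*} [MeasureSpace α]
    [SigmaFinite (volume : Measure α)] [NormedAddCommGroup E] [NormedSpace ℝ E]
    {n : ℕ} {f : (Fin (n + 1) → α) → E} (hf : Integrable f) :
    ∫ t, f t = ∫ x, ∫ y, f (Fin.cons x y) := by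
  have hsymm := (volume_preserving_piFinSuccAbove (fun _ : Fin (n + 1) => α) 0).symm
  have hcons : ∀ p : α × (Fin n → α),
      (MeasurableEquiv.piFinSuccAbove (fun _ => α) 0).symm p = Fin.cons p.1 p.2 := fun p =>
    Fin.insertNth_zero' p.1 p.2
  rw [← hsymm.integrable_comp_emb (MeasurableEquiv.measurableEmbedding _),
    Measure.volume_eq_prod] at hf
  rw [← hsymm.integral_comp (MeasurableEquiv.measurableEmbedding _), Measure.volume_eq_prod]
  exact (integral_prod _ hf).trans (by simp only [Function.comp_apply, hcons])

lemma integral_Vk_succ {n : ℕ} (hn : 1 ≤ n) (u v : ℝ) :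
    ∫ t in Vk (n + 1) u v, mukIntegrand (n + 1) u t
      = ∫ x in Ioo 0 1, (u - x)⁻¹ * ∫ y in Vk n (u - x) v, mukIntegrand n (u - x) y := by
  rw [← integral_indicator (measurableSet_Vk _ u v), ← integral_indicator measurableSet_Ioo,
    integral_eq_integral_integral_cons
      ((integrable_indicator_iff (measurableSet_Vk _ u v)).mpr (integrableOn_mukIntegrand _ u v))]
  congr 1 with x
  by_cases hx : x ∈ Ioo 0 1
  · have hslice : ∀ y, (Vk (n + 1) u v).indicator (mukIntegrand (n + 1) u) (Fin.cons x y)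
        = (Vk n (u - x) v).indicator (fun y => (u - x)⁻¹ * mukIntegrand n (u - x) y) y := by
      classical
      intro y
      simp only [indicator_apply, cons_mem_Vk_iff hn u v x y, hx, true_and, mukIntegrand_cons hn]
    rw [indicator_of_mem hx, integral_congr_ae (ae_of_all _ hslice),
      integral_indicator (measurableSet_Vk n _ v), integral_const_mul]
  · have hslice : ∀ y, (Vk (n + 1) u v).indicator (mukIntegrand (n + 1) u) (Fin.cons x y) = 0 :=
      fun y => indicator_of_notMem (fun h => hx ((cons_mem_Vk_iff hn u v x y).mp h).1) _
    rw [indicator_of_notMem hx, integral_congr_ae (ae_of_all _ hslice), integral_zero]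

lemma Vk_one {s : ℝ} (hs : 1 < s) (v : ℝ) :
    Vk 1 s v = MeasurableEquiv.funUnique (Fin 1) ℝ ⁻¹' (Ioo 0 1 ∩ Ioo (s - 1) (s - v)) := by
  ext t
  simp [Vk, Fin.default_eq_zero, hs]

lemma muk_eq_inv_mul_integral {n : ℕ} (hn : 1 ≤ n) {s : ℝ} (hs : 1 < s) (v : ℝ) :
    muk n s v = s⁻¹ * ∫ y in Vk n s v, mukIntegrand n s y := by
  rcases hn.eq_or_lt with rfl | hn
  · have hone : mukIntegrand 1 s = fun _ => 1 := by ext; simp [mukIntegrand]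
    rw [muk, if_pos rfl, hone, setIntegral_const, smul_eq_mul, mul_one, Vk_one hs,
      measureReal_def]
    exact congrArg (fun m => s⁻¹ * m.toReal)
      ((volume_preserving_funUnique (Fin 1) ℝ).measure_preimage_equiv _).symm
  · exact muk_of_ne_one hn.ne' s v

lemma mul_muk_succ {n : ℕ} (hn : 1 ≤ n) {u : ℝ} (hu : 1 < u) (v : ℝ) :
    u * muk (n + 1) u v = ∫ s in (max 1 (u - 1))..u, muk n s v := by
  have hm : 0 < min 1 (u - 1) := lt_min one_pos (sub_pos.mpr hu)
  have hslice : ∀ x ∈ Ioo 0 (min 1 (u - 1)),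
      (u - x)⁻¹ * ∫ y in Vk n (u - x) v, mukIntegrand n (u - x) y = muk n (u - x) v :=
    fun x hx => (muk_eq_inv_mul_integral hn (by linarith [hx.2.trans_le (min_le_right _ _)]) v).symm
  have hvanish : ∀ x ∈ Ioo 0 1 \ Ioo 0 (min 1 (u - 1)),
      (u - x)⁻¹ * ∫ y in Vk n (u - x) v, mukIntegrand n (u - x) y = 0 := by
    rintro x ⟨⟨hx0, hx1⟩, hx⟩
    have hux : u - x ≤ 1 := by
      by_contra! h
      exact hx ⟨hx0, lt_min hx1 (by linarith)⟩
    rw [Vk_eq_empty hux, Measure.restrict_empty, integral_zero_measure, mul_zero]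
  calc u * muk (n + 1) u v
      = ∫ t in Vk (n + 1) u v, mukIntegrand (n + 1) u t := by
        rw [muk_of_ne_one (by omega), mul_inv_cancel_left₀ (by linarith)]
    _ = ∫ x in Ioo 0 1, (u - x)⁻¹ * ∫ y in Vk n (u - x) v, mukIntegrand n (u - x) y :=
        integral_Vk_succ hn u v
    _ = ∫ x in Ioo 0 (min 1 (u - 1)), muk n (u - x) v := by
        rw [setIntegral_eq_of_subset_of_forall_sdiff_eq_zero measurableSet_Ioo
          (Ioo_subset_Ioo_right (min_le_left _ _)) hvanish]
        exact setIntegral_congr_fun measurableSet_Ioo hslice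
    _ = ∫ x in 0..min 1 (u - 1), muk n (u - x) v := by
        rw [intervalIntegral.integral_of_le hm.le, integral_Ioc_eq_integral_Ioo]
    _ = ∫ s in (u - min 1 (u - 1))..(u - 0), muk n s v :=
        intervalIntegral.integral_comp_sub_left (fun s => muk n s v) u
    _ = ∫ s in (max 1 (u - 1))..u, muk n s v := by
        rw [← max_sub_sub_left, sub_sub_cancel, sub_zero, max_comm]

theorem muk_recurrence_general (u v : ℝ) (k : ℕ) (hk : 2 ≤ k) :
    (u ≤ 1 → u * muk k u v = 0) ∧
    (1 < u → u * muk k u v = ∫ s in (max 1 (u-1))..u, muk (k-1) s v) := by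
  obtain ⟨n, hn, rfl⟩ : ∃ n, 1 ≤ n ∧ k = n + 1 := ⟨k - 1, by omega, by omega⟩
  refine ⟨fun hu => ?_, fun hu => mul_muk_succ hn hu v⟩
  rw [muk_of_ne_one (by omega), Vk_eq_empty hu, Measure.restrict_empty, integral_zero_measure,
    mul_zero, mul_zero]

/-- Recurrence for `μ_k` (Proposition 3.2, (3.2)). -/
theorem muk_recurrence (u v : ℝ) (hu : 0 < u) (hv0 : 0 ≤ v) (hv : v < min 1 u)
    (k : ℕ) (hk : 2 ≤ k) :
    (u ≤ 1 → u * muk k u v = 0) ∧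
    (1 < u → u * muk k u v = ∫ s in (max 1 (u-1))..u, muk (k-1) s v) :=
  muk_recurrence_general u v k hk
end

section
/- Let 𝒜 be a finite nonempty set of positive integers, x := max 𝒜, and y ≥ 1 a real. Then Ψ_𝒜(y)·log x = ∫_1^x Ψ_{𝒜∩[1,t]}(y)·dt/t + ∑_{d ≤ x, P⁺(d) ≤ y} Λ(d)·Ψ_𝒜(y,d), where Λ is the von Mangoldt function. -/
open scoped ArithmeticFunction

attribute [local instance] Classical.propDecidable

/-!
Split `log x = (log x - log n) + log n` for every `y`-smooth `n ∈ 𝒜`. Summed over `n`, the first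
parts are `∫_n^x dt/t`, which, interchanged with the sum, give the integral of the counting
function; the second parts are `∑_{d ∣ n} Λ d`, which, interchanged with the sum, give the
von Mangoldt sum, because every divisor of a `y`-smooth `n ≤ x` is itself `y`-smooth and `≤ x`.
-/

open Finset Real MeasureTheory intervalIntegral

lemma Pplus_le_of_dvd {d n : ℕ} (hn : n ≠ 0) (h : d ∣ n) : Pplus d ≤ Pplus n :=
  max_le_max le_rfl (sup_mono (Nat.primeFactors_mono h hn))

lemma divisors_subset_filter_Pplus_le {n x : ℕ} {y : ℝ} (hn : n ≠ 0) (hnx : n ≤ x)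
    (hny : (Pplus n : ℝ) ≤ y) :
    n.divisors ⊆ (Icc 1 x).filter (fun d => (Pplus d : ℝ) ≤ y) := by
  intro d hd
  obtain ⟨hdn, -⟩ := Nat.mem_divisors.1 hd
  have hPd : (Pplus d : ℝ) ≤ Pplus n := by exact_mod_cast Pplus_le_of_dvd hn hdn
  exact mem_filter.2 ⟨mem_Icc.2 ⟨Nat.pos_of_mem_divisors hd, (Nat.divisor_le hd).trans hnx⟩,
    hPd.trans hny⟩

lemma sum_vonMangoldt_mul_card_filter_dvd {S D : Finset ℕ} (h0 : 0 ∉ S)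
    (hD : ∀ n ∈ S, n.divisors ⊆ D) :
    ∑ d ∈ D, (Λ d : ℝ) * (#(S.filter (d ∣ ·)) : ℝ) = ∑ n ∈ S, Real.log n := by
  simp only [card_filter, Nat.cast_sum, Nat.cast_ite, Nat.cast_one, Nat.cast_zero, mul_sum,
    mul_ite, mul_one, mul_zero]
  rw [sum_comm]
  refine sum_congr rfl fun n hn => ?_
  have hn0 : n ≠ 0 := fun h => h0 (h ▸ hn)
  have hdiv : D.filter (· ∣ n) = n.divisors := by
    ext d
    simp only [mem_filter, Nat.mem_divisors]
    exact ⟨fun hd => ⟨hd.2, hn0⟩, fun hd => ⟨hD n hn (Nat.mem_divisors.2 hd), hd.1⟩⟩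
  rw [← sum_filter, hdiv, ArithmeticFunction.vonMangoldt_sum]

lemma intervalIntegrable_indicator_Ici_inv {a b x : ℝ} (hb : 0 < b) (hx : 0 < x) :
    IntervalIntegrable ((Set.Ici a).indicator fun t => t⁻¹) volume b x := by
  have h : IntervalIntegrable (fun t : ℝ => t⁻¹) volume b x :=
    intervalIntegrable_inv_iff.2 (Or.inr (Set.notMem_uIcc_of_lt hb hx))
  exact ⟨h.1.indicator measurableSet_Ici, h.2.indicator measurableSet_Ici⟩

lemma integral_indicator_Ici_inv {a b x : ℝ} (hb : 0 < b) (hba : b ≤ a) (hax : a ≤ x) :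
    ∫ t in b..x, (Set.Ici a).indicator (fun t => t⁻¹) t = Real.log x - Real.log a := by
  have ha : 0 < a := hb.trans_le hba
  have below : ∫ t in b..a, (Set.Ici a).indicator (fun t => t⁻¹) t = 0 := by
    rw [integral_of_le hba, integral_Ioc_eq_integral_Ioo]
    exact setIntegral_eq_zero_of_forall_eq_zero fun t ht =>
      Set.indicator_of_notMem (not_le.2 ht.2) _
  have above : ∫ t in a..x, (Set.Ici a).indicator (fun t => t⁻¹) t = ∫ t in a..x, t⁻¹ :=
    integral_congr fun t ht => Set.indicator_of_mem (Set.uIcc_of_le hax ▸ ht).1 _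
  rw [← integral_add_adjacent_intervals (intervalIntegrable_indicator_Ici_inv hb ha)
    (intervalIntegrable_indicator_Ici_inv ha (ha.trans_le hax)), below, above, zero_add,
    integral_inv_of_pos ha (ha.trans_le hax), log_div (ha.trans_le hax).ne' ha.ne']

lemma card_filter_le_div_eq_sum_indicator (S : Finset ℕ) (t : ℝ) :
    (#(S.filter fun (n : ℕ) => (n : ℝ) ≤ t) : ℝ) / t
      = ∑ n ∈ S, (Set.Ici (n : ℝ)).indicator (fun t => t⁻¹) t := by
  rw [card_filter, Nat.cast_sum, sum_div]
  refine sum_congr rfl fun n _ => ?_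
  by_cases h : (n : ℝ) ≤ t <;> simp [h]

lemma integral_card_filter_le_div {S : Finset ℕ} {x : ℝ} (hS : ∀ n ∈ S, 1 ≤ n ∧ (n : ℝ) ≤ x) :
    ∫ t in (1 : ℝ)..x, (#(S.filter fun (n : ℕ) => (n : ℝ) ≤ t) : ℝ) / t
      = ∑ n ∈ S, (Real.log x - Real.log n) := by
  simp only [card_filter_le_div_eq_sum_indicator]
  by_cases hx : 1 ≤ x
  · rw [integral_finsetSum fun n _ =>
      intervalIntegrable_indicator_Ici_inv one_pos (one_pos.trans_le hx)]
    exact sum_congr rfl fun n hn =>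
      integral_indicator_Ici_inv one_pos (by exact_mod_cast (hS n hn).1) (hS n hn).2
  · have hS0 : S = ∅ := eq_empty_of_forall_notMem fun n hn =>
      hx (le_trans (by exact_mod_cast (hS n hn).1) (hS n hn).2)
    simp [hS0]

theorem hildebrand_identity_general (𝒜 : Finset ℕ) (h𝒜 : 𝒜.Nonempty) (hpos : ∀ n ∈ 𝒜, 0 < n)
    (y : ℝ) :
    ((𝒜.filter (fun n => (Pplus n : ℝ) ≤ y)).card : ℝ) * Real.log (𝒜.max' h𝒜 : ℕ)
      = (∫ t in (1:ℝ)..((𝒜.max' h𝒜 : ℕ) : ℝ),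
          ((𝒜.filter (fun (n : ℕ) => (n : ℝ) ≤ t ∧ (Pplus n : ℝ) ≤ y)).card : ℝ) / t)
        + ∑ d ∈ (Finset.Icc 1 (𝒜.max' h𝒜)).filter (fun d => (Pplus d : ℝ) ≤ y),
            (Λ d : ℝ) * ((𝒜.filter (fun n => (Pplus n : ℝ) ≤ y ∧ d ∣ n)).card : ℝ) := by
  set x := 𝒜.max' h𝒜
  set S := 𝒜.filter (fun n => (Pplus n : ℝ) ≤ y)
  have hS : ∀ n ∈ S, 0 < n ∧ n ≤ x ∧ (Pplus n : ℝ) ≤ y := fun n hn =>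
    ⟨hpos n (mem_filter.1 hn).1, le_max' _ n (mem_filter.1 hn).1, (mem_filter.1 hn).2⟩
  have hcount (t : ℝ) : 𝒜.filter (fun (n : ℕ) => (n : ℝ) ≤ t ∧ (Pplus n : ℝ) ≤ y)
      = S.filter fun (n : ℕ) => (n : ℝ) ≤ t := by
    rw [filter_filter]
    exact filter_congr fun _ _ => and_comm
  have hdvd (d : ℕ) : 𝒜.filter (fun n => (Pplus n : ℝ) ≤ y ∧ d ∣ n) = S.filter (d ∣ ·) :=
    (filter_filter _ _ _).symm
  simp only [hcount, hdvd]
  rw [integral_card_filter_le_div fun n hn => ⟨(hS n hn).1, by exact_mod_cast (hS n hn).2.1⟩,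
    sum_vonMangoldt_mul_card_filter_dvd (fun h0 => (hS 0 h0).1.false) fun n hn =>
      divisors_subset_filter_Pplus_le (hS n hn).1.ne' (hS n hn).2.1 (hS n hn).2.2,
    ← sum_add_distrib]
  simp only [sub_add_cancel, sum_const, nsmul_eq_mul]

/-- Generalized Hildebrand identity (Proposition 3.12, (3.16)). -/
theorem hildebrand_identity (𝒜 : Finset ℕ) (h𝒜 : 𝒜.Nonempty) (hpos : ∀ n ∈ 𝒜, 0 < n)
    (y : ℝ) (hy : 1 ≤ y) :
    ((𝒜.filter (fun n => (Pplus n : ℝ) ≤ y)).card : ℝ) * Real.log (𝒜.max' h𝒜 : ℕ)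
      = (∫ t in (1:ℝ)..((𝒜.max' h𝒜 : ℕ) : ℝ),
          ((𝒜.filter (fun (n : ℕ) => (n : ℝ) ≤ t ∧ (Pplus n : ℝ) ≤ y)).card : ℝ) / t)
        + ∑ d ∈ (Finset.Icc 1 (𝒜.max' h𝒜)).filter (fun d => (Pplus d : ℝ) ≤ y),
            (Λ d : ℝ) * ((𝒜.filter (fun n => (Pplus n : ℝ) ≤ y ∧ d ∣ n)).card : ℝ) :=
  hildebrand_identity_general 𝒜 h𝒜 hpos y
end

section
/- Let 𝒜 be a finite nonempty set of positive integers, y > 1 a real, x := max 𝒜, and define T(y,n) := ∑_{p ≤ y prime, n·p ≤ x} Ψ_𝒜(y, p·n)·log p and R(y,n) := ∑_{p ≤ y prime, x/y < n·p ≤ x} A_{p·n}·log p for each positive integer n. Then for every integer k ≥ 1, T(y,1) ≥ R(y,1) + ∑_{i=1}^{k} ∑_{p_1,…,p_i primes ≤ y with p_1⋯p_i ≤ x/y} Q(x; p_1,…,p_i)·R(y, p_1⋯p_i), where for primes p_1,…,p_i with p_1⋯p_i < x, Q(x; p_1,…,p_i) := (∏_{j=1}^i log p_j)/(∏_{j=1}^i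 log(x/(p_1⋯p_j))). -/
attribute [local instance] Classical.propDecidable

/-- `A_d`, the number of multiples of `d` in `𝒜`. -/
def Ad (𝒜 : Finset ℕ) (d : ℕ) : ℕ := (𝒜.filter (fun n => d ∣ n)).card

/-- `Ψ_𝒜(y,d)`, the number of `y`-friable multiples of `d` in `𝒜`. -/
noncomputable def PsiAd (𝒜 : Finset ℕ) (y : ℝ) (d : ℕ) : ℕ :=
  (𝒜.filter (fun n => (Pplus n : ℝ) ≤ y ∧ d ∣ n)).card

/-- `T(y,n) = ∑_{p ≤ y, np ≤ x} Ψ_𝒜(y, pn) log p`. -/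
noncomputable def Tsum (𝒜 : Finset ℕ) (x : ℕ) (y : ℝ) (n : ℕ) : ℝ :=
  ∑ p ∈ (Finset.range (x + 1)).filter
      (fun (p : ℕ) => p.Prime ∧ (p : ℝ) ≤ y ∧ n * p ≤ x),
    (PsiAd 𝒜 y (p * n) : ℝ) * Real.log p

/-- `R(y,n) = ∑_{p ≤ y, x/y < np ≤ x} A_{pn} log p`. -/
noncomputable def Rsum (𝒜 : Finset ℕ) (x : ℕ) (y : ℝ) (n : ℕ) : ℝ :=
  ∑ p ∈ (Finset.range (x + 1)).filter
      (fun (p : ℕ) => p.Prime ∧ (p : ℝ) ≤ y ∧ (x : ℝ) / y < ((n * p : ℕ) : ℝ) ∧ n * p ≤ x),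
    (Ad 𝒜 (p * n) : ℝ) * Real.log p

/-- `Q(x; p_1, …, p_i) = ∏ log p_j / ∏ log (x/(p_1⋯p_j))`. -/
noncomputable def Qfac (x : ℝ) (i : ℕ) (p : Fin i → ℕ) : ℝ :=
  (∏ j, Real.log (p j)) /
    ∏ j : Fin i, Real.log (x / ∏ l ∈ Finset.univ.filter (fun l : Fin i => l ≤ j), (p l : ℝ))

/-!
If `n` is `y`-friable and `x / y < n p ≤ x`, every multiple of `n p` up to `x` has cofactor below
`y`, so `Ψ_𝒜(y, p n) = A_{p n}`: the primes with `n p > x / y` contribute exactly `R(y, n)` to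
`T(y, n)`. For the others, the primes `p` with `p m ∣ a` multiply to a divisor of `a / m ≤ x / m`,
so `T(y, m) ≤ Ψ_𝒜(y, m) log (x / m)` and hence
`Ψ_𝒜(y, n p) log p ≥ (log p / log (x / n p)) T(y, n p)`. Together,
`T(y, n) ≥ R(y, n) + ∑_{n p ≤ x / y} (log p / log (x / n p)) T(y, n p)`; iterating this `k` times
along prime tuples produces the weights `Q(x; p_1, …, p_i)`, and the last tail is nonnegative.
-/

open Finset

lemma Pplus_le_of_forall_mem_primeFactors {m : ℕ} {y : ℝ} (hy : 1 ≤ y)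
    (h : ∀ p ∈ m.primeFactors, (p : ℝ) ≤ y) : (Pplus m : ℝ) ≤ y := by
  have : Pplus m ≤ ⌊y⌋₊ :=
    max_le (Nat.le_floor (by simpa using hy)) (Finset.sup_le fun p hp => Nat.le_floor (h p hp))
  exact (Nat.cast_le.mpr this).trans (Nat.floor_le (by linarith))

lemma sum_log_le_log_of_forall_prime_dvd {s : Finset ℕ} {t : ℕ} (ht : t ≠ 0)
    (hs : ∀ p ∈ s, p.Prime ∧ p ∣ t) : ∑ p ∈ s, Real.log p ≤ Real.log t := by
  have hdvd : ∏ p ∈ s, p ∣ t :=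
    Finset.prod_primes_dvd t (fun p hp => (hs p hp).1.prime) fun p hp => (hs p hp).2
  have hne : ∀ p ∈ s, (p : ℝ) ≠ 0 := fun p hp => by exact_mod_cast (hs p hp).1.ne_zero
  rw [← Real.log_prod hne]
  refine Real.log_le_log (prod_pos fun p hp => ?_) ?_
  · exact_mod_cast (hs p hp).1.pos
  · rw [← Nat.cast_prod]
    exact_mod_cast Nat.le_of_dvd (Nat.pos_of_ne_zero ht) hdvd

section Counting

variable {𝒜 : Finset ℕ} {x : ℕ} {y : ℝ}

lemma Tsum_le_PsiAd_mul_log (hmax : ∀ m ∈ 𝒜, m ≤ x) (hpos : ∀ m ∈ 𝒜, 0 < m) {d : ℕ}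
    (hd : 0 < d) : Tsum 𝒜 x y d ≤ PsiAd 𝒜 y d * Real.log (x / d) := by
  set F := 𝒜.filter fun m => (Pplus m : ℝ) ≤ y ∧ d ∣ m
  set I := (range (x + 1)).filter fun p : ℕ => p.Prime ∧ (p : ℝ) ≤ y ∧ d * p ≤ x
  have hPsi (p : ℕ) : (PsiAd 𝒜 y (p * d) : ℝ) * Real.log p =
      ∑ m ∈ F, if p * d ∣ m then Real.log p else 0 := by
    have : 𝒜.filter (fun m => (Pplus m : ℝ) ≤ y ∧ p * d ∣ m) = F.filter (p * d ∣ ·) := by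
      rw [filter_filter]
      exact filter_congr fun m _ => ⟨fun h => ⟨⟨h.1, dvd_of_mul_left_dvd h.2⟩, h.2⟩,
        fun h => ⟨h.1.1, h.2⟩⟩
    rw [PsiAd, this, ← sum_filter, sum_const, nsmul_eq_mul]
  have hswap : Tsum 𝒜 x y d = ∑ m ∈ F, ∑ p ∈ I.filter (· * d ∣ m), Real.log p := by
    change ∑ p ∈ I, _ = _
    simp only [hPsi, sum_filter]
    exact sum_comm
  have hinner : ∀ m ∈ F, ∑ p ∈ I.filter (· * d ∣ m), Real.log p ≤ Real.log (x / d) := by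
    intro m hm
    obtain ⟨hmA, -, hdm⟩ := mem_filter.mp hm
    have hq : m / d ≠ 0 := (Nat.div_pos (Nat.le_of_dvd (hpos m hmA) hdm) hd).ne'
    refine (sum_log_le_log_of_forall_prime_dvd hq fun p hp => ?_).trans ?_
    · obtain ⟨hpI, hpm⟩ := mem_filter.mp hp
      exact ⟨(mem_filter.mp hpI).2.1, Nat.dvd_div_of_mul_dvd (by rwa [mul_comm])⟩
    · refine Real.log_le_log (by exact_mod_cast Nat.pos_of_ne_zero hq) ?_
      exact Nat.cast_div_le.trans (by gcongr; exact_mod_cast hmax m hmA)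
  calc Tsum 𝒜 x y d ≤ ∑ _m ∈ F, Real.log (x / d) := hswap ▸ sum_le_sum hinner
    _ = PsiAd 𝒜 y d * Real.log (x / d) := by rw [sum_const, nsmul_eq_mul]; rfl

lemma PsiAd_eq_Ad (hmax : ∀ m ∈ 𝒜, m ≤ x) (hy : 1 ≤ y) {d : ℕ}
    (hd : ∀ p ∈ d.primeFactors, (p : ℝ) ≤ y) (hdx : x / y < d) : PsiAd 𝒜 y d = Ad 𝒜 d := by
  rw [PsiAd, Ad]
  refine congrArg card (filter_congr fun m hm => and_iff_right_of_imp fun ⟨t, hmt⟩ => ?_)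
  refine Pplus_le_of_forall_mem_primeFactors hy fun p hp => ?_
  obtain ⟨hp, hpm, hm0⟩ := Nat.mem_primeFactors.mp hp
  rw [hmt] at hpm hm0
  rcases hp.dvd_mul.mp hpm with hpd | hpt
  · exact hd p (Nat.mem_primeFactors.mpr ⟨hp, hpd, left_ne_zero_of_mul hm0⟩)
  · have hty : (t : ℝ) < y := by
      have htx : (d : ℝ) * t ≤ x := by exact_mod_cast hmt ▸ hmax m hm
      have hxd : (x : ℝ) < d * y := (div_lt_iff₀ (by linarith)).mp hdx
      exact lt_of_mul_lt_mul_left (htx.trans_lt hxd) (Nat.cast_nonneg d)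
    have hpt' : p ≤ t := Nat.le_of_dvd (Nat.pos_of_ne_zero (right_ne_zero_of_mul hm0)) hpt
    exact (Nat.cast_le.mpr hpt').trans hty.le

noncomputable def stepPrimes (x : ℕ) (y : ℝ) (n : ℕ) : Finset ℕ :=
  (range (x + 1)).filter fun p => p.Prime ∧ (p : ℝ) ≤ y ∧ ((n * p : ℕ) : ℝ) ≤ x / y

lemma Rsum_add_sum_stepPrimes_le_Tsum (hmax : ∀ m ∈ 𝒜, m ≤ x) (hpos : ∀ m ∈ 𝒜, 0 < m)
    (hy : 1 ≤ y) {n : ℕ} (hn : 0 < n) (hfri : ∀ p ∈ n.primeFactors, (p : ℝ) ≤ y) :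
    Rsum 𝒜 x y n + ∑ p ∈ stepPrimes x y n,
        Real.log p / Real.log (x / (n * p : ℕ)) * Tsum 𝒜 x y (n * p) ≤ Tsum 𝒜 x y n := by
  set I := (range (x + 1)).filter fun p : ℕ => p.Prime ∧ (p : ℝ) ≤ y ∧ n * p ≤ x
  have hxy : (x : ℝ) / y ≤ x := div_le_self (Nat.cast_nonneg x) hy
  have hsplit := sum_filter_add_sum_filter_not I (fun p => ((n * p : ℕ) : ℝ) ≤ x / y)
    fun p => (PsiAd 𝒜 y (p * n) : ℝ) * Real.log p
  have hlow : I.filter (fun p => ((n * p : ℕ) : ℝ) ≤ x / y) = stepPrimes x y n := by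
    ext p
    simp only [I, stepPrimes, mem_filter]
    exact ⟨fun ⟨⟨hr, hp, hpy, _⟩, hnp⟩ => ⟨hr, hp, hpy, hnp⟩,
      fun ⟨hr, hp, hpy, hnp⟩ => ⟨⟨hr, hp, hpy, by exact_mod_cast hnp.trans hxy⟩, hnp⟩⟩
  have hhigh : ∑ p ∈ I.filter (fun p => ¬((n * p : ℕ) : ℝ) ≤ x / y),
      (PsiAd 𝒜 y (p * n) : ℝ) * Real.log p = Rsum 𝒜 x y n := by
    rw [Rsum]
    refine sum_congr (by ext p; simp only [I, mem_filter, not_le]; tauto) fun p hp => ?_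
    obtain ⟨-, hp, hpy, hnp, -⟩ := mem_filter.mp hp
    refine congrArg (fun c : ℕ => (c : ℝ) * Real.log p) (PsiAd_eq_Ad hmax hy (fun r hr => ?_) ?_)
    · rw [Nat.primeFactors_mul hp.ne_zero hn.ne', hp.primeFactors, mem_union,
        mem_singleton] at hr
      rcases hr with rfl | hr
      exacts [hpy, hfri r hr]
    · rwa [mul_comm p n]
  have hterm : ∀ p ∈ stepPrimes x y n, Real.log p / Real.log (x / (n * p : ℕ)) *
      Tsum 𝒜 x y (n * p) ≤ (PsiAd 𝒜 y (p * n) : ℝ) * Real.log p := by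
    intro p hp
    obtain ⟨-, hp, -, hnp⟩ := mem_filter.mp hp
    have hnp0 : 0 < n * p := Nat.mul_pos hn hp.pos
    have hL : 0 ≤ Real.log (x / (n * p : ℕ)) :=
      Real.log_nonneg ((one_le_div (by exact_mod_cast hnp0)).mpr (hnp.trans hxy))
    rw [div_mul_eq_mul_div, mul_div_assoc, mul_comm _ (Real.log p), mul_comm p n]
    refine mul_le_mul_of_nonneg_left (div_le_of_le_mul₀ hL (Nat.cast_nonneg _) ?_)
      (Real.log_nonneg (by exact_mod_cast hp.one_lt.le))
    exact Tsum_le_PsiAd_mul_log hmax hpos hnp0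
  calc _ ≤ Rsum 𝒜 x y n + ∑ p ∈ stepPrimes x y n, (PsiAd 𝒜 y (p * n) : ℝ) * Real.log p :=
        add_le_add_right (sum_le_sum hterm) _
    _ = Tsum 𝒜 x y n := by rw [← hlow, ← hhigh, add_comm]; exact hsplit

lemma Tsum_nonneg (𝒜 : Finset ℕ) (x : ℕ) (y : ℝ) (n : ℕ) : 0 ≤ Tsum 𝒜 x y n :=
  sum_nonneg fun p _ => mul_nonneg (Nat.cast_nonneg _) (Real.log_natCast_nonneg p)

end Counting

lemma Qfac_snoc (x : ℝ) {k : ℕ} (q : Fin k → ℕ) (p : ℕ) :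
    Qfac x (k + 1) (Fin.snoc q p) =
      Qfac x k q * (Real.log p / Real.log (x / ((∏ j, (q j : ℝ)) * p))) := by
  have hlast : Iic (Fin.last k) = univ := by ext; simp [Fin.le_last]
  simp only [Qfac, filter_ge_eq_Iic, Fin.prod_univ_castSucc, ← Fin.map_castSuccEmb_Iic, prod_map,
    Fin.castSuccEmb_apply, hlast, Fin.snoc_castSucc, Fin.snoc_last]
  exact (div_mul_div_comm _ _ _ _).symm

lemma Qfac_nonneg {x : ℝ} {i : ℕ} {q : Fin i → ℕ} (hq : ∀ j, q j ≠ 0)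
    (hx : ∏ j, (q j : ℝ) ≤ x) : 0 ≤ Qfac x i q := by
  refine div_nonneg (prod_nonneg fun j _ => Real.log_natCast_nonneg _)
    (prod_nonneg fun j _ => Real.log_nonneg ?_)
  have hq1 : ∀ l, (1 : ℝ) ≤ q l := fun l => by exact_mod_cast Nat.one_le_iff_ne_zero.mpr (hq l)
  have hpre : (1 : ℝ) ≤ ∏ l ∈ univ.filter (· ≤ j), (q l : ℝ) := one_le_prod fun l _ => hq1 l
  refine (one_le_div (by linarith)).mpr ((prod_le_prod_of_subset_of_one_le (filter_subset _ _)
    (fun l _ => by linarith [hq1 l]) fun l _ _ => hq1 l).trans hx)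

section Tuples

variable {x : ℕ} {y : ℝ}

noncomputable def primeTuples (x : ℕ) (y : ℝ) (i : ℕ) : Finset (Fin i → ℕ) :=
  (Fintype.piFinset fun _ => range (x + 1)).filter
    fun q => (∀ j, (q j).Prime ∧ (q j : ℝ) ≤ y) ∧ ((∏ j, q j : ℕ) : ℝ) ≤ x / y

lemma mem_primeTuples (hy : 1 ≤ y) {i : ℕ} {q : Fin i → ℕ} :
    q ∈ primeTuples x y i ↔
      (∀ j, (q j).Prime ∧ (q j : ℝ) ≤ y) ∧ ((∏ j, q j : ℕ) : ℝ) ≤ x / y := by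
  refine ⟨fun h => (mem_filter.mp h).2, fun h => mem_filter.mpr
    ⟨Fintype.mem_piFinset.mpr fun j => mem_range.mpr (Nat.lt_succ_of_le ?_), h⟩⟩
  have hprod : ((∏ l, q l : ℕ) : ℝ) ≤ x := h.2.trans (div_le_self (Nat.cast_nonneg x) hy)
  exact (single_le_prod' (fun l _ => (h.1 l).1.one_lt.le) (mem_univ j)).trans
    (by exact_mod_cast hprod)

lemma snoc_mem_primeTuples (hy : 1 ≤ y) {k : ℕ} {q : Fin k → ℕ} {p : ℕ} :
    Fin.snoc q p ∈ primeTuples x y (k + 1) ↔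
      q ∈ primeTuples x y k ∧ p ∈ stepPrimes x y (∏ j, q j) := by
  rw [mem_primeTuples hy, mem_primeTuples hy, Fin.forall_fin_succ']
  simp only [Fin.snoc_castSucc, Fin.snoc_last, Fin.prod_snoc]
  constructor
  · rintro ⟨⟨hq, hp, hpy⟩, hprod⟩
    have hle : ((∏ j, q j : ℕ) : ℝ) ≤ x / y :=
      le_trans (by exact_mod_cast Nat.le_mul_of_pos_right _ hp.pos) hprod
    refine ⟨⟨hq, hle⟩, mem_filter.mpr ⟨mem_range.mpr (Nat.lt_succ_of_le ?_), hp, hpy, hprod⟩⟩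
    have hx : (((∏ j, q j) * p : ℕ) : ℝ) ≤ x := hprod.trans (div_le_self (Nat.cast_nonneg x) hy)
    exact (Nat.le_mul_of_pos_left p (prod_pos fun j _ => (hq j).1.pos)).trans
      (by exact_mod_cast hx)
  · rintro ⟨⟨hq, -⟩, hp⟩
    obtain ⟨-, hp, hpy, hprod⟩ := mem_filter.mp hp
    exact ⟨⟨hq, hp, hpy⟩, hprod⟩

lemma sum_primeTuples_succ (hy : 1 ≤ y) (k : ℕ) (f : (Fin (k + 1) → ℕ) → ℝ) :
    ∑ q ∈ primeTuples x y (k + 1), f q =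
      ∑ q ∈ primeTuples x y k, ∑ p ∈ stepPrimes x y (∏ j, q j), f (Fin.snoc q p) := by
  rw [sum_sigma']
  refine sum_nbij' (fun q => ⟨Fin.init q, q (Fin.last k)⟩) (fun z => Fin.snoc z.1 z.2)
    (fun q hq => ?_) (fun z hz => ?_) (fun q _ => Fin.snoc_init_self q)
    (fun z _ => by simp) (fun q _ => by rw [Fin.snoc_init_self])
  · rw [← Fin.snoc_init_self q, snoc_mem_primeTuples hy] at hq
    simpa using hq
  · exact (snoc_mem_primeTuples hy).mpr (mem_sigma.mp hz)

end Tuples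

lemma forall_mem_primeFactors_prod_le {y : ℝ} {i : ℕ} {q : Fin i → ℕ}
    (hq : ∀ j, (q j).Prime ∧ (q j : ℝ) ≤ y) : ∀ p ∈ (∏ j, q j).primeFactors, (p : ℝ) ≤ y := by
  intro p hp
  obtain ⟨j, -, hpj⟩ := (Nat.prime_of_mem_primeFactors hp).prime.exists_mem_finset_dvd
    (Nat.dvd_of_mem_primeFactors hp)
  rw [(Nat.prime_dvd_prime_iff_eq (Nat.prime_of_mem_primeFactors hp) (hq j).1).mp hpj]
  exact (hq j).2

section Iteration

variable {𝒜 : Finset ℕ} {x : ℕ} {y : ℝ}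

noncomputable def tupleSum (x : ℕ) (y : ℝ) (i : ℕ) (f : ℕ → ℝ) : ℝ :=
  ∑ q ∈ primeTuples x y i, Qfac x i q * f (∏ j, q j)

lemma Qfac_nonneg_of_mem_primeTuples (hy : 1 ≤ y) {i : ℕ} {q : Fin i → ℕ}
    (hq : q ∈ primeTuples x y i) : 0 ≤ Qfac x i q := by
  obtain ⟨hq, hprod⟩ := (mem_primeTuples hy).mp hq
  push_cast at hprod
  exact Qfac_nonneg (fun j => (hq j).1.ne_zero) (hprod.trans (div_le_self (Nat.cast_nonneg x) hy))

lemma tupleSum_Tsum_nonneg (hy : 1 ≤ y) (i : ℕ) : 0 ≤ tupleSum x y i (Tsum 𝒜 x y) :=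
  sum_nonneg fun _ hq => mul_nonneg (Qfac_nonneg_of_mem_primeTuples hy hq) (Tsum_nonneg _ _ _ _)

lemma tsum_indicator_eq_tupleSum (hy : 1 ≤ y) (i : ℕ) (f : ℕ → ℝ) :
    ∑' q : Fin i → ℕ, Set.indicator
      {q : Fin i → ℕ | (∀ j, (q j).Prime ∧ (q j : ℝ) ≤ y) ∧ ((∏ j, q j : ℕ) : ℝ) ≤ x / y}
      (fun q => Qfac x i q * f (∏ j, q j)) q = tupleSum x y i f := by
  rw [tsum_eq_sum (s := primeTuples x y i) ?_]
  · exact sum_congr rfl fun q hq => Set.indicator_of_mem (by exact (mem_primeTuples hy).mp hq) _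
  · exact fun q hq => Set.indicator_of_notMem (by exact fun h => hq ((mem_primeTuples hy).mpr h)) _

-- The empty tuple lies in `primeTuples x y 0` only when `1 ≤ x / y`, so this is not the `k = 0`
-- case of the next lemma.
lemma Rsum_add_tupleSum_one_le (hmax : ∀ m ∈ 𝒜, m ≤ x) (hpos : ∀ m ∈ 𝒜, 0 < m) (hy : 1 ≤ y) :
    Rsum 𝒜 x y 1 + tupleSum x y 1 (Tsum 𝒜 x y) ≤ Tsum 𝒜 x y 1 := by
  have hone : tupleSum x y 1 (Tsum 𝒜 x y) = ∑ p ∈ stepPrimes x y 1,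
      Real.log p / Real.log (x / (1 * p : ℕ)) * Tsum 𝒜 x y (1 * p) := by
    refine sum_nbij' (· 0) (fun p => fun _ => p) (fun q hq => ?_) (fun p hp => ?_)
      (fun q _ => funext fun j => by rw [Subsingleton.elim j 0]) (fun p _ => rfl) (fun q _ => ?_)
    · simpa [primeTuples, stepPrimes, Fin.forall_fin_one, and_assoc] using hq
    · simpa [primeTuples, stepPrimes, Fin.forall_fin_one, and_assoc] using hp
    · simp [Qfac]
  rw [hone]
  exact Rsum_add_sum_stepPrimes_le_Tsum hmax hpos hy one_pos (by simp)

lemma tupleSum_Rsum_add_tupleSum_succ_le (hmax : ∀ m ∈ 𝒜, m ≤ x) (hpos : ∀ m ∈ 𝒜, 0 < m)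
    (hy : 1 ≤ y) (k : ℕ) :
    tupleSum x y k (Rsum 𝒜 x y) + tupleSum x y (k + 1) (Tsum 𝒜 x y) ≤
      tupleSum x y k (Tsum 𝒜 x y) := by
  rw [tupleSum, tupleSum, tupleSum, sum_primeTuples_succ hy, ← sum_add_distrib]
  refine sum_le_sum fun q hq => ?_
  obtain ⟨hqy, -⟩ := (mem_primeTuples hy).mp hq
  have key := Rsum_add_sum_stepPrimes_le_Tsum hmax hpos hy (prod_pos fun j _ => (hqy j).1.pos)
    (forall_mem_primeFactors_prod_le hqy)
  calc _ = Qfac x k q * (Rsum 𝒜 x y (∏ j, q j) + ∑ p ∈ stepPrimes x y (∏ j, q j),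
        Real.log p / Real.log (x / ((∏ j, q j) * p : ℕ)) * Tsum 𝒜 x y ((∏ j, q j) * p)) := by
        simp only [Qfac_snoc, Fin.prod_snoc, mul_add, mul_sum, mul_assoc]
        push_cast
        rfl
    _ ≤ _ := mul_le_mul_of_nonneg_left key (Qfac_nonneg_of_mem_primeTuples hy hq)

lemma Rsum_add_sum_tupleSum_le (hmax : ∀ m ∈ 𝒜, m ≤ x) (hpos : ∀ m ∈ 𝒜, 0 < m) (hy : 1 ≤ y)
    (k : ℕ) :
    Rsum 𝒜 x y 1 + ∑ i ∈ Icc 1 k, tupleSum x y i (Rsum 𝒜 x y) +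
      tupleSum x y (k + 1) (Tsum 𝒜 x y) ≤ Tsum 𝒜 x y 1 := by
  induction k with
  | zero => simpa using Rsum_add_tupleSum_one_le hmax hpos hy
  | succ k ih =>
    rw [sum_Icc_succ_top (by omega)]
    linarith [tupleSum_Rsum_add_tupleSum_succ_le hmax hpos hy (k + 1)]

end Iteration

/-- The iterated lower bound for `T(y,1)` (Proposition 3.15). -/
theorem T_iterated_lower_bound (𝒜 : Finset ℕ) (h𝒜 : 𝒜.Nonempty) (hpos : ∀ n ∈ 𝒜, 0 < n)
    (y : ℝ) (hy : 1 < y) (x : ℕ) (hx : x = 𝒜.max' h𝒜) :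
    ∀ k : ℕ, 1 ≤ k →
      Rsum 𝒜 x y 1 +
        ∑ i ∈ Finset.Icc 1 k,
          ∑' p : Fin i → ℕ,
            Set.indicator
              {q : Fin i → ℕ | (∀ j, (q j).Prime ∧ ((q j : ℝ) ≤ y)) ∧
                ((∏ j, q j : ℕ) : ℝ) ≤ (x : ℝ) / y}
              (fun q => Qfac (x : ℝ) i q * Rsum 𝒜 x y (∏ j, q j)) p
      ≤ Tsum 𝒜 x y 1 := by
  intro k _
  have hmax : ∀ m ∈ 𝒜, m ≤ x := fun m hm => hx ▸ le_max' 𝒜 m hm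
  simp only [tsum_indicator_eq_tupleSum hy.le]
  linarith [Rsum_add_sum_tupleSum_le hmax hpos hy.le k,
    tupleSum_Tsum_nonneg (𝒜 := 𝒜) (x := x) hy.le (k + 1)]
end
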